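/- Let n = 3 and μ = Σ_{j=1}^3 a_j δ_{y_j} with distinct y_j ∈ I(3, Ω) and nonzero a_j ∈ ℂ, and let Y(ω) = F[μ](ω) + W(ω), ω ∈ [−Ω, Ω], with |W(ω)| < σ for all ω ∈ [−Ω, Ω]. If min_{p≠j} |y_p − y_j| ≥ (2π/Ω) · (8σ/m_min)^{1/4}, then there does not exist any σ-admissible measure of Y with only two support points; that is, there exist no distinct ŷ_1, ŷ_2 ∈ ℝ and â_1, â_2 ∈ ℂ such that |Σ_{l=1}^2 â_l e^{i ŷ_l ω} − Y(ω)| < σ for all ω ∈ [−Ω, Ω]. -/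

import Mathlib

/-!
The residual `G = F[μ̂] - F[μ]` is a sum of five exponentials of size at most `2σ` on `[-Ω, Ω]`.
Put `t = (8σ / m_min)^{1/4}`. The true nodes are `2πt/Ω`-separated, so by pigeonhole some true node
`y_{j₀}` is at distance at least `πt/Ω` from both fitted nodes, hence from all four other nodes.
Four difference operators `G ↦ G (· + h) - e^{i x h} G`, one per other node `x`, with steps
`h ≤ Ω/2` chosen so that `|e^{i y_{j₀} h} - e^{i x h}| ≥ 2 sin (πt/4)`, reduce `G` to the single
term `a_{j₀} ∏ (e^{i y_{j₀} h} - e^{i x h}) e^{i y_{j₀} ω}` while multiplying the bound by `2⁴`.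
Hence `m_min (2 sin (πt/4))⁴ ≤ 32σ = 4 m_min t⁴`, which is false because the three true nodes fit
in an interval of length `2π/Ω`, forcing `t < 1/2`.
-/

open Real Finset

noncomputable def wave (y ω : ℝ) : ℂ := Complex.exp (Complex.I * y * ω)

lemma wave_add (y ω h : ℝ) : wave y (ω + h) = wave y h * wave y ω := by
  simp only [wave, ← Complex.exp_add]
  push_cast
  ring_nf

lemma norm_wave (y ω : ℝ) : ‖wave y ω‖ = 1 := by
  rw [wave, mul_assoc, ← Complex.ofReal_mul, mul_comm]
  exact Complex.norm_exp_ofReal_mul_I _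

lemma norm_wave_sub_wave (a b h : ℝ) :
    ‖wave a h - wave b h‖ = 2 * |sin ((a - b) * h / 2)| := by
  have hfactor : wave a h - wave b h
      = wave b h * (Complex.exp (Complex.I * ((a - b) * h : ℝ)) - 1) := by
    simp only [wave, mul_sub, mul_one, ← Complex.exp_add]
    push_cast
    ring_nf
  rw [hfactor, norm_mul, norm_wave, one_mul, Complex.norm_exp_I_mul_ofReal_sub_one, norm_mul,
    Real.norm_eq_abs, Real.norm_eq_abs, abs_two]

lemma exists_two_mul_sin_le_norm_wave_sub_wave {a b δ L : ℝ} (hδ : 0 ≤ δ) (hL : 0 < L)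
    (hab : δ ≤ |a - b|) :
    ∃ h ∈ Set.Icc 0 L, 2 * sin (δ * L / 2) ≤ ‖wave a h - wave b h‖ := by
  have habs : ∀ h, |sin ((a - b) * h / 2)| = |sin (|a - b| * h / 2)| := by
    intro h
    rcases abs_choice (a - b) with hθ | hθ
    · rw [hθ]
    · rw [hθ, neg_mul, neg_div, sin_neg, abs_neg]
  simp only [norm_wave_sub_wave, habs]
  by_cases hlarge : π / L ≤ |a - b|
  · have hθ : 0 < |a - b| := (div_pos pi_pos hL).trans_le hlarge
    refine ⟨π / |a - b|, ⟨by positivity, (div_le_iff₀ hθ).2 ?_⟩, ?_⟩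
    · rwa [div_le_iff₀ hL, mul_comm] at hlarge
    · rw [mul_div_cancel₀ _ hθ.ne', sin_pi_div_two, abs_one]
      linarith [sin_le_one (δ * L / 2)]
  · refine ⟨L, ⟨hL.le, le_rfl⟩, ?_⟩
    have hangle : |a - b| * L / 2 < π / 2 := by
      rw [not_le, lt_div_iff₀ hL] at hlarge
      linarith
    have hmono : sin (δ * L / 2) ≤ sin (|a - b| * L / 2) :=
      strictMonoOn_sin.monotoneOn ⟨by nlinarith [pi_pos], by nlinarith⟩
        ⟨by nlinarith [pi_pos, abs_nonneg (a - b)], hangle.le⟩ (by gcongr)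
    linarith [le_abs_self (sin (|a - b| * L / 2))]

section Annihilation

variable {ι : Type*} [Fintype ι] [DecidableEq ι] (c : ι → ℂ) (x h : ι → ℝ)

/-- Each factor comes from one difference operator `G ↦ G (· + h i) - wave (x i) (h i) * G`, which
multiplies the coefficient of `wave (x k)` by `wave (x k) (h i) - wave (x i) (h i)` (killing the
frequency `x i`) and at most doubles a sup bound, on a window shorter by `h i`. -/
lemma norm_sum_mul_prod_wave_sub_le {α β ε : ℝ}
    (hG : ∀ ω ∈ Set.Icc α β, ‖∑ k, c k * wave (x k) ω‖ ≤ ε) (s : Finset ι) (hh : ∀ i ∈ s, 0 ≤ h i) :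
    ∀ ω ∈ Set.Icc α (β - ∑ i ∈ s, h i),
      ‖∑ k, c k * (∏ i ∈ s, (wave (x k) (h i) - wave (x i) (h i))) * wave (x k) ω‖
        ≤ 2 ^ #s * ε := by
  induction s using Finset.induction_on with
  | empty => simpa using hG
  | insert i s hi ih =>
    set F : ℝ → ℂ := fun ω =>
      ∑ k, c k * (∏ j ∈ s, (wave (x k) (h j) - wave (x j) (h j))) * wave (x k) ω
    have hF := ih fun j hj => hh j (mem_insert_of_mem hj)
    have hstep : ∀ ω, ∑ k, c k * (∏ j ∈ insert i s, (wave (x k) (h j) - wave (x j) (h j)))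
        * wave (x k) ω = F (ω + h i) - wave (x i) (h i) * F ω := by
      intro ω
      simp only [F, prod_insert hi, wave_add, mul_sum, ← sum_sub_distrib]
      exact sum_congr rfl fun k _ => by ring
    intro ω ⟨hαω, hωβ⟩
    rw [sum_insert hi] at hωβ
    have hhi := hh i (mem_insert_self i s)
    rw [hstep, card_insert_of_notMem hi, pow_succ]
    calc ‖F (ω + h i) - wave (x i) (h i) * F ω‖ ≤ ‖F (ω + h i)‖ + ‖F ω‖ := by
          simpa only [norm_mul, norm_wave, one_mul] using
            norm_sub_le (F (ω + h i)) (wave (x i) (h i) * F ω)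
      _ ≤ 2 ^ #s * ε + 2 ^ #s * ε :=
          add_le_add (hF _ ⟨by linarith, by linarith⟩) (hF _ ⟨hαω, by linarith⟩)
      _ = 2 ^ #s * 2 * ε := by ring

lemma norm_mul_prod_norm_wave_sub_le {α β ε : ℝ} (k₀ : ι) (hh : ∀ i, 0 ≤ h i)
    (hG : ∀ ω ∈ Set.Icc α β, ‖∑ k, c k * wave (x k) ω‖ ≤ ε)
    (hαβ : α + ∑ i ∈ univ.erase k₀, h i ≤ β) :
    ‖c k₀‖ * ∏ i ∈ univ.erase k₀, ‖wave (x k₀) (h i) - wave (x i) (h i)‖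
      ≤ 2 ^ (Fintype.card ι - 1) * ε := by
  have hbound := norm_sum_mul_prod_wave_sub_le c x h hG (univ.erase k₀) (fun i _ => hh i) α
    ⟨le_rfl, by linarith⟩
  have hsingle : ∀ k ≠ k₀,
      c k * (∏ i ∈ univ.erase k₀, (wave (x k) (h i) - wave (x i) (h i))) * wave (x k) α = 0 :=
    fun k hk => by rw [prod_eq_zero (mem_erase.2 ⟨hk, mem_univ k⟩) (sub_self _)]; ring
  rwa [sum_eq_single k₀ (fun k _ hk => hsingle k hk) (by simp), norm_mul, norm_mul, norm_wave,
    mul_one, norm_prod, card_erase_of_mem (mem_univ k₀), card_univ] at hbound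

lemma norm_mul_two_mul_sin_pow_le {α β ε δ L : ℝ} (hδ : 0 ≤ δ) (hL : 0 < L) (hδL : δ * L ≤ 2 * π)
    (k₀ : ι) (hsep : ∀ i ≠ k₀, δ ≤ |x k₀ - x i|)
    (hG : ∀ ω ∈ Set.Icc α β, ‖∑ k, c k * wave (x k) ω‖ ≤ ε)
    (hαβ : α + (Fintype.card ι - 1 : ℕ) * L ≤ β) :
    ‖c k₀‖ * (2 * sin (δ * L / 2)) ^ (Fintype.card ι - 1) ≤ 2 ^ (Fintype.card ι - 1) * ε := by
  have hstep : ∀ i, ∃ h ∈ Set.Icc 0 L,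
      i ≠ k₀ → 2 * sin (δ * L / 2) ≤ ‖wave (x k₀) h - wave (x i) h‖ := by
    intro i
    by_cases hi : i = k₀
    · exact ⟨0, ⟨le_rfl, hL.le⟩, fun h => absurd hi h⟩
    · obtain ⟨h, hmem, hle⟩ := exists_two_mul_sin_le_norm_wave_sub_wave hδ hL (hsep i hi)
      exact ⟨h, hmem, fun _ => hle⟩
  choose h hmem hle using hstep
  have hsum : ∑ i ∈ univ.erase k₀, h i ≤ (Fintype.card ι - 1 : ℕ) * L := by
    simpa [card_erase_of_mem (mem_univ k₀)] using
      sum_le_card_nsmul (univ.erase k₀) h L fun i _ => (hmem i).2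
  have hsin : 0 ≤ 2 * sin (δ * L / 2) :=
    mul_nonneg zero_le_two (sin_nonneg_of_nonneg_of_le_pi (by positivity) (by linarith))
  have hprod : (2 * sin (δ * L / 2)) ^ (Fintype.card ι - 1)
      ≤ ∏ i ∈ univ.erase k₀, ‖wave (x k₀) (h i) - wave (x i) (h i)‖ := by
    rw [← card_univ, ← card_erase_of_mem (mem_univ k₀), ← prod_const]
    exact prod_le_prod (fun _ _ => hsin) fun i hi => hle i (ne_of_mem_erase hi)
  calc ‖c k₀‖ * (2 * sin (δ * L / 2)) ^ (Fintype.card ι - 1)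
      ≤ ‖c k₀‖ * ∏ i ∈ univ.erase k₀, ‖wave (x k₀) (h i) - wave (x i) (h i)‖ := by gcongr
    _ ≤ 2 ^ (Fintype.card ι - 1) * ε :=
      norm_mul_prod_norm_wave_sub_le c x h k₀ (fun i => (hmem i).1) hG (by linarith)

end Annihilation

lemma exists_forall_le_abs_sub {ι κ : Type*} [Fintype ι] [Fintype κ]
    (hcard : Fintype.card κ < Fintype.card ι) {y : ι → ℝ} {δ : ℝ}
    (hy : ∀ p q, p ≠ q → 2 * δ ≤ |y p - y q|) (u : κ → ℝ) :
    ∃ j, ∀ k, δ ≤ |u k - y j| := by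
  by_contra! hnear
  choose f hf using hnear
  obtain ⟨p, q, hpq, hfpq⟩ := Fintype.exists_ne_map_eq_of_card_lt f hcard
  have hp := hf p
  have hq := hf q
  rw [hfpq, abs_sub_comm] at hp
  linarith [hy p q hpq, abs_sub_le (y p) (u (f q)) (y q)]

lemma exists_norm_mul_two_mul_sin_pow_le {ι κ : Type*} [Fintype ι] [Fintype κ] [DecidableEq ι]
    [DecidableEq κ] (hcard : Fintype.card κ < Fintype.card ι) (a : ι → ℂ) (b : κ → ℂ)
    {y : ι → ℝ} {u : κ → ℝ} {α β ε δ L : ℝ} (hδ : 0 ≤ δ) (hL : 0 < L) (hδL : δ * L ≤ 2 * π)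
    (hy : ∀ p q, p ≠ q → 2 * δ ≤ |y p - y q|)
    (hG : ∀ ω ∈ Set.Icc α β, ‖∑ k, b k * wave (u k) ω - ∑ j, a j * wave (y j) ω‖ ≤ ε)
    (hαβ : α + (Fintype.card ι + Fintype.card κ - 1 : ℕ) * L ≤ β) :
    ∃ j, ‖a j‖ * (2 * sin (δ * L / 2)) ^ (Fintype.card ι + Fintype.card κ - 1)
      ≤ 2 ^ (Fintype.card ι + Fintype.card κ - 1) * ε := by
  obtain ⟨j₀, hj₀⟩ := exists_forall_le_abs_sub hcard hy u
  have hsep : ∀ i ≠ Sum.inl j₀, δ ≤ |Sum.elim y u (Sum.inl j₀) - Sum.elim y u i| := by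
    rintro (p | l) hi
    · exact le_trans (by linarith) (hy j₀ p (by rintro rfl; exact hi rfl))
    · simpa only [Sum.elim_inl, Sum.elim_inr, abs_sub_comm] using hj₀ l
  have hG' : ∀ ω ∈ Set.Icc α β, ‖∑ k, Sum.elim (-a) b k * wave (Sum.elim y u k) ω‖ ≤ ε := by
    intro ω hω
    simpa [Fintype.sum_sum_type, sub_eq_neg_add] using hG ω hω
  refine ⟨j₀, ?_⟩
  simpa [Fintype.card_sum] using norm_mul_two_mul_sin_pow_le (Sum.elim (-a) b) (Sum.elim y u)
    hδ hL hδL (Sum.inl j₀) hsep hG' (by simpa using hαβ)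

lemma two_mul_lt_sub_of_le_abs_sub {y : Fin 3 → ℝ} {l u d : ℝ} (hy : ∀ j, y j ∈ Set.Ioo l u)
    (hsep : ∀ p q, p ≠ q → d ≤ |y p - y q|) : 2 * d < u - l := by
  have h01 := hsep 0 1 (by decide)
  have h02 := hsep 0 2 (by decide)
  have h12 := hsep 1 2 (by decide)
  obtain ⟨⟨l0, u0⟩, ⟨l1, u1⟩, ⟨l2, u2⟩⟩ := And.intro (hy 0) (And.intro (hy 1) (hy 2))
  rcases le_abs.1 h01 with h01 | h01 <;> rcases le_abs.1 h02 with h02 | h02 <;>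
    rcases le_abs.1 h12 with h12 | h12 <;> linarith

lemma four_mul_pow_four_lt_two_mul_sin_pow_four {t : ℝ} (ht₀ : 0 < t) (ht : t < 1 / 2) :
    4 * t ^ 4 < (2 * sin (π * t / 4)) ^ 4 := by
  have hx : 0 < π * t / 4 := by positivity
  have hx_lt : π * t / 4 < 2 / 5 := by nlinarith [pi_lt_d2]
  have hcube : (π * t / 4) ^ 3 ≤ 4 / 25 * (π * t / 4) := by
    nlinarith [mul_pos hx hx, mul_lt_mul_of_pos_left hx_lt (mul_pos hx hx)]
  have hsin : 36 / 25 * t < 2 * sin (π * t / 4) := by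
    nlinarith [pi_gt_three, sin_gt_sub_cube hx]
  calc 4 * t ^ 4 < (36 / 25 * t) ^ 4 := by nlinarith [pow_pos ht₀ 4]
    _ < (2 * sin (π * t / 4)) ^ 4 := by gcongr

theorem number_detection_stability_three_points
    (Ω σ : ℝ) (hΩ : 0 < Ω) (hσ : 0 < σ)
    (y : Fin 3 → ℝ)
    (a : Fin 3 → ℂ) (ha : ∀ j, a j ≠ 0)
    (hloc : ∀ j, y j ∈ Set.Ioo (-(Real.pi / Ω)) (Real.pi / Ω))
    (mmin : ℝ) (hmmin : mmin = ⨅ j, ‖a j‖)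
    (W : ℝ → ℂ) (hW : ∀ ω ∈ Set.Icc (-Ω) Ω, ‖W ω‖ < σ)
    (hsep : ∀ p j, p ≠ j →
      2 * Real.pi / Ω * (8 * σ / mmin) ^ ((1 : ℝ) / 4) ≤ |y p - y j|) :
    ¬ ∃ (yh₁ yh₂ : ℝ) (_ : yh₁ ≠ yh₂) (ah₁ ah₂ : ℂ),
        ∀ ω ∈ Set.Icc (-Ω) Ω,
          ‖(ah₁ * Complex.exp (Complex.I * (yh₁ : ℂ) * (ω : ℂ))
              + ah₂ * Complex.exp (Complex.I * (yh₂ : ℂ) * (ω : ℂ))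
              - (∑ j, a j * Complex.exp (Complex.I * (y j : ℂ) * (ω : ℂ)) + W ω))‖ < σ := by
  rintro ⟨yh₁, yh₂, -, ah₁, ah₂, hadm⟩
  obtain ⟨j, hj⟩ := exists_eq_ciInf_of_finite (f := fun j => ‖a j‖)
  have hm : 0 < mmin := hmmin ▸ hj ▸ norm_pos_iff.2 (ha j)
  set t := (8 * σ / mmin) ^ ((1 : ℝ) / 4)
  have ht₀ : 0 < t := by positivity
  have ht₄ : mmin * t ^ 4 = 8 * σ := by
    have hroot : t ^ 4 = 8 * σ / mmin := by
      simp only [t, one_div]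
      exact_mod_cast rpow_inv_natCast_pow (by positivity) four_ne_zero
    rw [hroot, mul_div_cancel₀ _ hm.ne']
  have ht : t < 1 / 2 := by
    have h := two_mul_lt_sub_of_le_abs_sub hloc hsep
    field_simp at h
    nlinarith [pi_pos]
  have hy : ∀ p q, p ≠ q → 2 * (π * t / Ω) ≤ |y p - y q| := fun p q hpq =>
    (by ring : 2 * π / Ω * t = 2 * (π * t / Ω)) ▸ hsep p q hpq
  have hG : ∀ ω ∈ Set.Icc (-Ω) Ω,
      ‖∑ k, ![ah₁, ah₂] k * wave (![yh₁, yh₂] k) ω - ∑ j, a j * wave (y j) ω‖ ≤ 2 * σ := by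
    intro ω hω
    refine (norm_sub_le_norm_sub_add_norm_sub _ (∑ j, a j * wave (y j) ω + W ω) _).trans ?_
    rw [add_sub_cancel_left]
    simp only [Fin.sum_univ_two, Matrix.cons_val_zero, Matrix.cons_val_one, wave]
    linarith [hadm ω hω, hW ω hω]
  obtain ⟨j₀, hj₀⟩ := exists_norm_mul_two_mul_sin_pow_le (κ := Fin 2) (by simp) a ![ah₁, ah₂]
    (by positivity) (half_pos hΩ) (by field_simp; nlinarith [pi_pos]) hy hG (by norm_num; linarith)
  rw [show π * t / Ω * (Ω / 2) / 2 = π * t / 4 by field_simp; ring] at hj₀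
  norm_num at hj₀
  have hmj : mmin ≤ ‖a j₀‖ := hmmin ▸ ciInf_le (Finite.bddBelow_range _) j₀
  have hsin := four_mul_pow_four_lt_two_mul_sin_pow_four ht₀ ht
  nlinarith [mul_le_mul_of_nonneg_right hmj (by positivity : (0 : ℝ) ≤ (2 * sin (π * t / 4)) ^ 4),
    mul_lt_mul_of_pos_left hsin hm]
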